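/- arXiv:2310.01317 — 3 statements merged into one kernel-verified Lean document; each statement's English description precedes it below -/
import Mathlib

section
/- Let n = 2m and a, b ∈ (𝔽_{2^n})^* with Tr₁ⁿ(b/a²) = 0, where Tr₁ⁿ is the absolute trace of 𝔽_{2^n}. Then the quadratic x² + ax + b = 0 has both of its solutions in μ_{2^m+1} if and only if b = a^{1−2^m} and Tr₁^m(b/a²) = 1, where Tr₁^m denotes the absolute trace of the subfield 𝔽_{2^m} (note b/a² ∈ 𝔽_{2^m} in that case). -/
/-!
Put `q = 2^m` and `c = b / a²`. The Artin–Schreier map `y ↦ y² + y` is two-to-one on `𝔽_{2^n}` and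
lands in the trace-zero set, the root set of a polynomial of degree `2^(n-1)`; so its image is
exactly that set, and `Tr₁ⁿ(c) = 0` yields `y` with `y² + y = c`. The roots of `x² + ax + b` are then
`ay` and `a(y + 1)`. As `(ay)^(q+1) = a^(q+1) y^q y` and `(a(y+1))^(q+1) = a^(q+1) (y^q + 1)(y + 1)`,
both roots lie in `μ_{q+1}` iff `y^q = y + 1` and `a^(q+1) c = 1`. The first condition says
`Tr₁^m(c) = y^q + y = 1` (telescoping), the second says `b = a^(1-q)`.
-/

/-- The absolute trace `Tr₁ᵏ` of the paper, as a sum of Frobenius powers. -/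
def FTr (F : Type*) [Field F] (k : ℕ) (x : F) : F :=
  ∑ i ∈ Finset.range k, x ^ 2 ^ i

section

open Finset Polynomial

variable {F : Type*} [Field F]

theorem card_filter_FTr_eq_zero_le [Fintype F] [DecidableEq F] (k : ℕ) :
    #{t : F | FTr F (k + 1) t = 0} ≤ 2 ^ k := by
  set P : F[X] := ∑ i ∈ range (k + 1), X ^ 2 ^ i
  have hP : P.coeff (2 ^ k) = 1 := by
    simp [P, coeff_X_pow, (Nat.pow_right_injective le_rfl).eq_iff]
  have hdeg : P.natDegree ≤ 2 ^ k :=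
    natDegree_sum_le_of_forall_le _ _ fun i hi => by
      rw [natDegree_X_pow]
      exact Nat.pow_le_pow_right two_pos (Nat.lt_succ_iff.mp (mem_range.mp hi))
  have hsub : ({t | FTr F (k + 1) t = 0} : Finset F) ⊆ P.roots.toFinset := fun t ht => by
    have hP0 : P ≠ 0 := fun h => by simp [h] at hP
    simpa [hP0, P, eval_finsetSum, FTr] using (mem_filter.mp ht).2
  calc _ ≤ P.roots.toFinset.card := card_le_card hsub
    _ ≤ P.roots.card := Multiset.toFinset_card_le _
    _ ≤ 2 ^ k := P.card_roots'.trans hdeg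

section CharTwo

variable [CharP F 2]

theorem FTr_sq_add_self (k : ℕ) (y : F) : FTr F k (y ^ 2 + y) = y ^ 2 ^ k + y := by
  induction k with
  | zero => simp [FTr, CharTwo.add_self_eq_zero]
  | succ k ih =>
    rw [FTr, sum_range_succ, ← FTr, ih, add_pow_char_pow, ← pow_mul, ← pow_succ']
    linear_combination y ^ 2 ^ k * CharTwo.two_eq_zero (R := F)

theorem FTr_sq_add_self_eq_one_iff (k : ℕ) (y : F) :
    FTr F k (y ^ 2 + y) = 1 ↔ y ^ 2 ^ k = y + 1 := by
  rw [FTr_sq_add_self]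
  constructor <;> intro h
  · linear_combination h - y * CharTwo.two_eq_zero (R := F)
  · linear_combination h + y * CharTwo.two_eq_zero (R := F)

theorem sq_add_mul_add_eq_mul (a x y : F) :
    x ^ 2 + a * x + a ^ 2 * (y ^ 2 + y) = (x + a * y) * (x + a * (y + 1)) := by
  linear_combination (- a * x * y) * CharTwo.two_eq_zero (R := F)

theorem sq_add_mul_add_eq_zero_iff {a b x y : F} (hb : b = a ^ 2 * (y ^ 2 + y)) :
    x ^ 2 + a * x + b = 0 ↔ x = a * y ∨ x = a * (y + 1) := by
  rw [hb, sq_add_mul_add_eq_mul, mul_eq_zero, CharTwo.add_eq_zero, CharTwo.add_eq_zero]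

theorem sq_add_self_eq_sq_add_self_iff {y z : F} :
    y ^ 2 + y = z ^ 2 + z ↔ y = z ∨ y = z + 1 := by
  simpa [CharTwo.add_eq_zero] using
    sq_add_mul_add_eq_zero_iff (a := 1) (x := y) (b := z ^ 2 + z) (y := z) (by ring)

theorem exists_sq_add_self_eq_of_FTr_eq_zero [Fintype F] {k : ℕ}
    (hF : Fintype.card F = 2 ^ k) {c : F} (hc : FTr F k c = 0) : ∃ y, y ^ 2 + y = c := by
  classical
  obtain ⟨j, rfl⟩ : ∃ j, k = j + 1 := Nat.exists_eq_succ_of_ne_zero fun h => by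
    simpa [h, hF] using Fintype.one_lt_card (α := F)
  set S := univ.image fun y : F => y ^ 2 + y
  have hST : S ⊆ ({t | FTr F (j + 1) t = 0} : Finset F) := by
    simp only [S, subset_iff, mem_image, mem_filter, mem_univ, true_and]
    rintro _ ⟨y, -, rfl⟩
    rw [FTr_sq_add_self, ← hF, FiniteField.pow_card, CharTwo.add_self_eq_zero]
  have hfiber : ∀ t ∈ S, #{y | y ^ 2 + y = t} ≤ 2 := by
    simp only [S, mem_image, mem_univ, true_and]
    rintro _ ⟨z, rfl⟩
    refine (card_le_card (t := {z, z + 1}) fun y hy => ?_).trans card_le_two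
    simpa [sq_add_self_eq_sq_add_self_iff] using hy
  have hS : 2 ^ (j + 1) ≤ 2 * #S := by
    simpa [hF] using card_le_mul_card_image univ 2 hfiber
  have hT := card_filter_FTr_eq_zero_le (F := F) j
  have hSeq := eq_of_subset_of_card_le hST (by omega)
  have hcS : c ∈ S := hSeq ▸ mem_filter.mpr ⟨mem_univ c, hc⟩
  simpa [S] using hcS

theorem pow_add_one_eq_one_and_iff {a : F} (ha : a ≠ 0) (q : ℕ) (y : F) :
    (a * y) ^ (2 ^ q + 1) = 1 ∧ (a * (y + 1)) ^ (2 ^ q + 1) = 1 ↔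
      y ^ 2 ^ q = y + 1 ∧ a ^ (2 ^ q + 1) * (y ^ 2 + y) = 1 := by
  rw [mul_pow, mul_pow, pow_succ y, pow_succ (y + 1), add_pow_char_pow, one_pow]
  have hA : a ^ (2 ^ q + 1) ≠ 0 := pow_ne_zero _ ha
  generalize a ^ (2 ^ q + 1) = A, y ^ 2 ^ q = Y at hA ⊢
  constructor
  · rintro ⟨h₀, h₁⟩
    have hY : Y = y + 1 := by
      rw [← CharTwo.add_eq_zero]
      have : A * (Y + (y + 1)) = 0 := by linear_combination h₁ - h₀
      exact (mul_eq_zero.mp this).resolve_left hA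
    exact ⟨hY, by rw [← h₀, hY]; ring⟩
  · rintro ⟨rfl, h⟩
    constructor
    · linear_combination h
    · linear_combination h + A * (y + 1) * CharTwo.two_eq_zero (R := F)

end CharTwo

theorem eq_zpow_one_sub_iff {a : F} (ha : a ≠ 0) (n : ℕ) (b : F) :
    b = a ^ ((1 : ℤ) - n) ↔ a ^ (n + 1) * (b / a ^ 2) = 1 := by
  rw [zpow_sub₀ ha, zpow_one, zpow_natCast]
  field_simp
  rw [pow_succ, sq, ← mul_assoc, mul_left_inj' ha]

end

theorem stmt_4_general (m : ℕ) (F : Type*) [Field F] [Fintype F]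
    (hF : Fintype.card F = 2 ^ (2 * m))
    (a b : F) (ha : a ≠ 0)
    (htr : FTr F (2 * m) (b / a ^ 2) = 0) :
    (∀ x : F, x ^ 2 + a * x + b = 0 → x ^ (2 ^ m + 1) = 1) ↔
      (b = a ^ ((1 : ℤ) - 2 ^ m) ∧ FTr F m (b / a ^ 2) = 1) := by
  have : CharP F 2 := charP_of_card_eq_prime_pow hF
  obtain ⟨y, hy⟩ := exists_sq_add_self_eq_of_FTr_eq_zero hF htr
  have hb : b = a ^ 2 * (y ^ 2 + y) := by rw [hy, mul_div_cancel₀ _ (pow_ne_zero 2 ha)]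
  simp only [sq_add_mul_add_eq_zero_iff hb, forall_eq_or_imp, forall_eq]
  rw [pow_add_one_eq_one_and_iff ha, ← hy, FTr_sq_add_self_eq_one_iff,
    show (1 : ℤ) - 2 ^ m = 1 - (2 ^ m : ℕ) by push_cast; rfl, eq_zpow_one_sub_iff ha, hy, and_comm]

/-- Both solutions of x^2 + ax + b = 0 lie in μ_{2^m+1} iff b = a^{1-2^m} and Tr_1^m(b/a^2) = 1. -/
theorem stmt_4 (m : ℕ) (hm : 1 ≤ m) (F : Type*) [Field F] [Fintype F]
    (hF : Fintype.card F = 2 ^ (2 * m))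
    (a b : F) (ha : a ≠ 0) (hb : b ≠ 0)
    (htr : FTr F (2 * m) (b / a ^ 2) = 0) :
    (∀ x : F, x ^ 2 + a * x + b = 0 → x ^ (2 ^ m + 1) = 1) ↔
      (b = a ^ ((1 : ℤ) - 2 ^ m) ∧ FTr F m (b / a ^ 2) = 1) :=
  stmt_4_general m F hF a b ha htr
end

section
/- Let n = 2m, q = 2^m, and c ∈ 𝔽_q^*. For b ∈ (𝔽_{q²})^*, the equation z² + b^{−1}c·z + b^{q−1} = 0 has exactly 2 solutions in μ_{q+1} if Tr₁^m(b^{q+1} c^{−2}) = 1, and exactly 0 solutions in μ_{q+1} if Tr₁^m(b^{q+1} c^{−2}) = 0. -/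
open Polynomial

theorem FiniteField.exists_algebraMap_eq_of_pow_card_eq {F K : Type*} [Field F] [Fintype F]
    [Field K] [Algebra F K] {x : K} (hx : x ^ Fintype.card F = x) :
    ∃ y : F, algebraMap F K y = x := by
  have hq : 1 < Fintype.card F := Fintype.one_lt_card
  have hsplit : (X ^ Fintype.card F - X : F[X]).Splits := by
    rw [splits_iff_card_roots, FiniteField.roots_X_pow_card_sub_X, ← Finset.card_def,
      Finset.card_univ, FiniteField.X_pow_card_sub_X_natDegree_eq _ hq]
  exact hsplit.mem_range_of_isRoot (FiniteField.X_pow_card_sub_X_ne_zero _ hq)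
    (by simp [hx])

theorem charP_two_of_card_eq_two_pow {F : Type*} [Field F] [Fintype F] {n : ℕ}
    (hF : Fintype.card F = 2 ^ n) : CharP F 2 := by
  rw [← ringChar.eq_iff, FiniteField.even_card_iff_char_two, hF]
  rcases n with _ | n
  · exact absurd hF (Fintype.one_lt_card (α := F)).ne'
  · simp [pow_succ]

theorem map_FTr {F K : Type*} [Field F] [Field K] (f : F →+* K) (k : ℕ) (x : F) :
    f (FTr F k x) = FTr K k (f x) := by
  simp [FTr]

section CharTwo

variable {F : Type*} [Field F] [CharP F 2]

theorem FTr_succ (k : ℕ) (x : F) : FTr F (k + 1) x = x + FTr F k x ^ 2 := by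
  simp only [FTr, Finset.sum_range_succ', CharTwo.sum_sq, ← pow_mul, ← pow_succ, pow_zero,
    pow_one, add_comm]

theorem pow_two_pow_eq_add_FTr {a w : F} (hw : w ^ 2 + w = a) (k : ℕ) :
    w ^ 2 ^ k = w + FTr F k a := by
  induction k with
  | zero => simp [FTr]
  | succ k ih =>
    rw [pow_succ, pow_mul, ih, CharTwo.add_sq, FTr_succ]
    linear_combination hw - w * CharTwo.two_eq_zero (R := F)

theorem sq_add_self_eq_iff {a w₀ w : F} (hw₀ : w₀ ^ 2 + w₀ = a) :
    w ^ 2 + w = a ↔ w = w₀ ∨ w = w₀ + 1 := by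
  have hfactor : (w + w₀) * (w + (w₀ + 1)) = (w ^ 2 + w) + (w₀ ^ 2 + w₀) := by
    linear_combination (w * w₀) * CharTwo.two_eq_zero (R := F)
  rw [← hw₀, ← CharTwo.add_eq_zero, ← hfactor, mul_eq_zero, CharTwo.add_eq_zero,
    CharTwo.add_eq_zero]

theorem exists_sq_add_self_eq_of_FTr_eq_one [Fintype F] {m : ℕ}
    (hF : Fintype.card F = (2 ^ m) ^ 2) {a : F} (ha : FTr F m a = 1) :
    ∃ w : F, w ^ 2 + w = a := by
  let K := AlgebraicClosure F
  have : CharP K 2 := charP_of_injective_algebraMap (algebraMap F K).injective 2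
  have hdeg : (X ^ 2 + X - C (algebraMap F K a)).degree = 2 := by compute_degree!
  obtain ⟨w, hroot⟩ := IsAlgClosed.exists_root _ (hdeg ▸ two_ne_zero)
  have hw : w ^ 2 + w = algebraMap F K a := by
    simpa [sub_eq_zero] using hroot
  have hfrob : w ^ 2 ^ m = w + 1 := by
    rw [pow_two_pow_eq_add_FTr hw, ← map_FTr, ha, map_one]
  have hfix : w ^ Fintype.card F = w := by
    rw [hF, pow_two, pow_mul, hfrob, add_pow_char_pow, hfrob, one_pow, add_assoc,
      CharTwo.add_self_eq_zero, add_zero]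
  obtain ⟨y, rfl⟩ := FiniteField.exists_algebraMap_eq_of_pow_card_eq hfix
  exact ⟨y, (algebraMap F K).injective (by simpa using hw)⟩

theorem pow_two_pow_add_one_eq_of_FTr_eq_one {a w : F} (hw : w ^ 2 + w = a) {m : ℕ}
    (ha : FTr F m a = 1) : w ^ (2 ^ m + 1) = a := by
  rw [pow_succ, pow_two_pow_eq_add_FTr hw, ha, ← hw]
  ring

theorem pow_two_pow_add_one_ne_of_FTr_eq_zero {a w : F} (hw : w ^ 2 + w = a) {m : ℕ}
    (ha : FTr F m a = 0) (ha₀ : a ≠ 0) : w ^ (2 ^ m + 1) ≠ a := by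
  rw [pow_succ, pow_two_pow_eq_add_FTr hw, ha, add_zero, ← hw, ← sq, Ne, left_eq_add]
  rintro rfl
  exact ha₀ (by simpa using hw.symm)

theorem setOf_pow_eq_one_and_quadratic_eq_image {β γ a : F} {n : ℕ} (hβ : β ≠ 0)
    (hγ : β ^ 2 * a = γ) (hnorm : β ^ n * a = 1) :
    {z : F | z ^ n = 1 ∧ z ^ 2 + β * z + γ = 0} =
      (β * ·) '' {w : F | w ^ n = a ∧ w ^ 2 + w = a} := by
  have hnorm' : ∀ w : F, (β * w) ^ n = 1 ↔ w ^ n = a := fun w => by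
    rw [mul_pow, ← hnorm, mul_right_inj' (pow_ne_zero n hβ)]
  have hquad : ∀ w : F, (β * w) ^ 2 + β * (β * w) + γ = 0 ↔ w ^ 2 + w = a := fun w => by
    rw [CharTwo.add_eq_zero, ← hγ,
      show (β * w) ^ 2 + β * (β * w) = β ^ 2 * (w ^ 2 + w) by ring,
      mul_right_inj' (pow_ne_zero 2 hβ)]
  ext z
  obtain ⟨w, rfl⟩ : ∃ w, z = β * w := ⟨z / β, (mul_div_cancel₀ z hβ).symm⟩
  rw [(mul_right_injective₀ hβ).mem_set_image]
  simp only [Set.mem_ofPred_eq, hnorm', hquad]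

end CharTwo

theorem stmt_5_general (m : ℕ) (F : Type*) [Field F] [Fintype F]
    (hF : Fintype.card F = (2 ^ m) ^ 2)
    (b c : F) (hb : b ≠ 0) (hc : c ≠ 0) (hcq : c ^ (2 ^ m) = c) :
    (FTr F m (b ^ (2 ^ m + 1) * (c ^ 2)⁻¹) = 1 →
        {z : F | z ^ (2 ^ m + 1) = 1 ∧
          z ^ 2 + b⁻¹ * c * z + b ^ (2 ^ m - 1) = 0}.ncard = 2) ∧
      (FTr F m (b ^ (2 ^ m + 1) * (c ^ 2)⁻¹) = 0 →
        {z : F | z ^ (2 ^ m + 1) = 1 ∧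
          z ^ 2 + b⁻¹ * c * z + b ^ (2 ^ m - 1) = 0}.ncard = 0) := by
  have : CharP F 2 := charP_two_of_card_eq_two_pow (hF.trans (pow_mul 2 m 2).symm)
  set q := 2 ^ m
  have hβ : b⁻¹ * c ≠ 0 := mul_ne_zero (inv_ne_zero hb) hc
  have hγ : (b⁻¹ * c) ^ 2 * (b ^ (q + 1) * (c ^ 2)⁻¹) = b ^ (q - 1) := by
    rw [show q + 1 = q - 1 + 2 by have := Nat.one_le_two_pow (n := m); omega, pow_add]
    field_simp
  have hnorm : (b⁻¹ * c) ^ (q + 1) * (b ^ (q + 1) * (c ^ 2)⁻¹) = 1 := by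
    rw [mul_pow, inv_pow, pow_succ c, hcq]
    field_simp
  set a := b ^ (q + 1) * (c ^ 2)⁻¹
  rw [setOf_pow_eq_one_and_quadratic_eq_image hβ hγ hnorm,
    Set.ncard_image_of_injective _ (mul_right_injective₀ hβ)]
  refine ⟨fun htr => ?_, fun htr => ?_⟩
  · obtain ⟨w₀, hw₀⟩ := exists_sq_add_self_eq_of_FTr_eq_one hF htr
    have hroots : {w : F | w ^ (q + 1) = a ∧ w ^ 2 + w = a} = {w₀, w₀ + 1} := by
      ext w
      simp only [Set.mem_ofPred_eq, Set.mem_insert_iff, Set.mem_singleton_iff,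
        ← sq_add_self_eq_iff hw₀, and_iff_right_iff_imp]
      exact fun hw => pow_two_pow_add_one_eq_of_FTr_eq_one hw htr
    rw [hroots, Set.ncard_pair (by simp)]
  · have ha₀ : a ≠ 0 := mul_ne_zero (pow_ne_zero _ hb) (inv_ne_zero (pow_ne_zero _ hc))
    rw [Set.ncard_eq_zero, Set.eq_empty_iff_forall_notMem]
    rintro w ⟨hnorm_w, hw⟩
    exact pow_two_pow_add_one_ne_of_FTr_eq_zero hw htr ha₀ hnorm_w

/-- z^2 + b⁻¹c z + b^{q-1} = 0 has 2 solutions in μ_{q+1} if Tr_1^m(b^{q+1}c^{-2}) = 1,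
and 0 solutions if Tr_1^m(b^{q+1}c^{-2}) = 0. -/
theorem stmt_5 (m : ℕ) (hm : 1 ≤ m) (F : Type*) [Field F] [Fintype F]
    (hF : Fintype.card F = (2 ^ m) ^ 2)
    (b c : F) (hb : b ≠ 0) (hc : c ≠ 0) (hcq : c ^ (2 ^ m) = c) :
    (FTr F m (b ^ (2 ^ m + 1) * (c ^ 2)⁻¹) = 1 →
        {z : F | z ^ (2 ^ m + 1) = 1 ∧
          z ^ 2 + b⁻¹ * c * z + b ^ (2 ^ m - 1) = 0}.ncard = 2) ∧
      (FTr F m (b ^ (2 ^ m + 1) * (c ^ 2)⁻¹) = 0 →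
        {z : F | z ^ (2 ^ m + 1) = 1 ∧
          z ^ 2 + b⁻¹ * c * z + b ^ (2 ^ m - 1) = 0}.ncard = 0) :=
  stmt_5_general m F hF b c hb hc hcq
end

section
/- Let n = 2m, q = 2^m, u a generator of μ_{q+1}, and c ∈ 𝔽_q^*. Let a_i ∈ 𝔽_{q²} and integers s_i with 0 ≤ s_i ≤ q satisfy a_i u^{i(1−2s_i)} + a_i^q u^{i(2s_i−1)} = c for every i = 0,…,q. Define f : 𝔽_{q²} → 𝔽₂ by f(0) = 0 and f(x) = Tr₁ⁿ(a_i x^{s_i(q−1)+1}) for x ∈ u^i 𝔽_q^*. Then f is bent, and its Walsh transform satisfies Σ_{x∈𝔽_{q²}}(−1)^{f(x)+Tr₁ⁿ(bx)} = q·(−1)^{Tr₁^m(c^{−2} b^{q+1})+1} for all b ∈ 𝔽_{q²}; in particular the dual of f is b ↦ Tr₁^m(c^{−2} b^{q+1}) + 1. -/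
open scoped Classical

/-- The additive character sign (-1)^y for y in the prime field {0,1}. -/
noncomputable def chi (F : Type*) [Field F] (y : F) : ℤ :=
  if y = 0 then 1 else -1

/-!
On the coset `u ^ i • 𝔽_q^*` write `x = u ^ i * y`; since `u ^ q = u⁻¹`, the power
`x ^ (s (q - 1) + 1)` equals `u ^ (i (1 - 2 s)) * y`, and the hypothesis on `a_i` collapses
`Tr₁ⁿ (a_i x ^ (s_i (q - 1) + 1))` to `Tr₁^m (c y) = Tr₁^m (c² x ^ (q + 1))`. So `f` is the trace of
`c²` times the norm. Translating `x` by `b ^ q / c²` shows that the Walsh value at `b` is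
`(-1) ^ Tr₁^m (c⁻² b ^ (q + 1))` times the value at `0`, and the latter is
`1 + (q + 1) ∑_{y ∈ 𝔽_q^*} (-1) ^ Tr₁^m (c y) = 1 - (q + 1) = -q`, because every nonzero `x` is
`u ^ i * y` for a unique `i ≤ q` and `y ∈ 𝔽_q^*`, with norm `y²`.
-/

open Finset

section Trace

variable {F : Type*} [Field F]

@[simp]
lemma FTr_zero (k : ℕ) : FTr F k 0 = 0 := by
  simp [FTr]

lemma FTr_add [CharP F 2] (k : ℕ) (x y : F) : FTr F k (x + y) = FTr F k x + FTr F k y := by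
  simp only [FTr, add_pow_char_pow, sum_add_distrib]

lemma FTr_two_mul [CharP F 2] (m : ℕ) (z : F) :
    FTr F (2 * m) z = FTr F m (z + z ^ 2 ^ m) := by
  rw [FTr_add, FTr, FTr, FTr, two_mul, sum_range_add]
  simp only [← pow_mul, ← pow_add]

lemma FTr_sq [CharP F 2] (k : ℕ) (t : F) : FTr F k t ^ 2 = FTr F k (t ^ 2) := by
  simp only [FTr, CharTwo.sum_sq, ← pow_mul, ← pow_succ, ← pow_succ']

lemma FTr_sq_of_pow_eq {k : ℕ} {t : F} (ht : t ^ 2 ^ k = t) : FTr F k (t ^ 2) = FTr F k t := by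
  have h := sum_range_succ' (fun i => t ^ 2 ^ i) k
  rw [sum_range_succ, ht] at h
  simpa [FTr, ← pow_mul, ← pow_succ'] using h.symm

lemma FTr_eq_zero_or_one [CharP F 2] {k : ℕ} {t : F} (ht : t ^ 2 ^ k = t) :
    FTr F k t = 0 ∨ FTr F k t = 1 :=
  IsIdempotentElem.iff_eq_zero_or_one.mp <| by
    rw [IsIdempotentElem, ← sq, FTr_sq, FTr_sq_of_pow_eq ht]

lemma exists_FTr_ne_zero [Fintype F] {k : ℕ} (hF : Fintype.card F = 2 ^ k) :
    ∃ z : F, FTr F k z ≠ 0 := by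
  have hk : k ≠ 0 := by
    rintro rfl
    exact (Fintype.one_lt_card (α := F)).ne' hF
  by_contra! h
  set P : Polynomial F := ∑ i ∈ range k, Polynomial.X ^ 2 ^ i
  have hdeg : P.natDegree < Fintype.card F := by
    refine hF ▸ (Polynomial.natDegree_sum_le_of_forall_le _ _ fun i hi => ?_).trans_lt
      (Nat.pow_lt_pow_right one_lt_two (Nat.sub_one_lt hk))
    rw [Polynomial.natDegree_X_pow]
    exact Nat.pow_le_pow_right two_pos (Nat.le_sub_one_of_lt (mem_range.mp hi))
  have hP : P = 0 :=
    Polynomial.eq_zero_of_natDegree_lt_card_of_eval_eq_zero P Function.injective_id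
      (by simpa [P, Polynomial.eval_finsetSum, FTr] using h) hdeg
  have hcoeff : P.coeff 1 = 1 := by
    simp only [P, Polynomial.finsetSum_coeff, Polynomial.coeff_X_pow]
    rw [sum_eq_single_of_mem 0 (mem_range.mpr (Nat.pos_of_ne_zero hk))]
    · simp
    · intro i _ hi
      simp [(Nat.one_lt_two_pow hi).ne]
  simp [hP] at hcoeff

end Trace

section Chi

variable {F : Type*} [Field F]

lemma chi_add [CharP F 2] {x y : F} (hx : x = 0 ∨ x = 1) (hy : y = 0 ∨ y = 1) :
    chi F (x + y) = chi F x * chi F y := by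
  rcases hx with rfl | rfl <;> rcases hy with rfl | rfl <;> simp [chi, CharTwo.add_self_eq_zero]

lemma chi_add_one [CharP F 2] {x : F} (hx : x = 0 ∨ x = 1) : chi F (x + 1) = -chi F x := by
  rw [chi_add hx (Or.inr rfl)]
  simp [chi]

lemma abs_chi (x : F) : |chi F x| = 1 := by
  unfold chi
  split <;> simp

end Chi

section Subfield

variable {F : Type*} [Field F] [Fintype F] {m : ℕ}

/-- The subfield `𝔽_q`, `q = 2 ^ m`, of a field with `q ^ 2` elements, as the fixed points
of `x ↦ x ^ q`. -/
noncomputable def frobeniusFixed (F : Type*) [Field F] [Fintype F] (m : ℕ) : Finset F :=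
  univ.filter fun t => t ^ 2 ^ m = t

lemma mem_frobeniusFixed {t : F} : t ∈ frobeniusFixed F m ↔ t ^ 2 ^ m = t := by
  simp [frobeniusFixed]

lemma pow_two_pow_pow_two_pow (hF : Fintype.card F = (2 ^ m) ^ 2) (x : F) :
    (x ^ 2 ^ m) ^ 2 ^ m = x := by
  rw [← pow_mul, ← sq, ← hF, FiniteField.pow_card]

lemma pow_two_pow_add_one_mem_frobeniusFixed (hF : Fintype.card F = (2 ^ m) ^ 2) (x : F) :
    x ^ (2 ^ m + 1) ∈ frobeniusFixed F m := by
  rw [mem_frobeniusFixed, pow_succ, mul_pow, pow_two_pow_pow_two_pow hF, mul_comm]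

variable [CharP F 2]

lemma exists_mem_frobeniusFixed_FTr_eq_one (hF : Fintype.card F = (2 ^ m) ^ 2) :
    ∃ t ∈ frobeniusFixed F m, FTr F m t = 1 := by
  obtain ⟨z, hz⟩ := exists_FTr_ne_zero (k := 2 * m) (by rw [hF, ← pow_mul, mul_comm])
  have hz2 : z ^ 2 ^ (2 * m) = z := by
    rw [mul_comm, pow_mul, sq, pow_mul, pow_two_pow_pow_two_pow hF]
  refine ⟨z + z ^ 2 ^ m, ?_, ?_⟩
  · rw [mem_frobeniusFixed, add_pow_char_pow, pow_two_pow_pow_two_pow hF, add_comm]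
  · rw [← FTr_two_mul]
    exact (FTr_eq_zero_or_one hz2).resolve_left hz

lemma sum_frobeniusFixed_chi_FTr_mul (hF : Fintype.card F = (2 ^ m) ^ 2) {c : F}
    (hc : c ∈ frobeniusFixed F m) (hc0 : c ≠ 0) :
    ∑ y ∈ frobeniusFixed F m, chi F (FTr F m (c * y)) = 0 := by
  obtain ⟨t, ht, ht1⟩ := exists_mem_frobeniusFixed_FTr_eq_one hF
  rw [mem_frobeniusFixed] at hc ht
  set e := c⁻¹ * t
  have he : ∀ y ∈ frobeniusFixed F m, y + e ∈ frobeniusFixed F m := fun y hy => by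
    rw [mem_frobeniusFixed] at hy ⊢
    rw [add_pow_char_pow, mul_pow, inv_pow, hc, ht, hy]
  have hshift : ∑ y ∈ frobeniusFixed F m, chi F (FTr F m (c * y)) =
      ∑ y ∈ frobeniusFixed F m, chi F (FTr F m (c * (y + e))) :=
    have hee : ∀ y : F, y + e + e = y := fun y => by
      rw [add_assoc, CharTwo.add_self_eq_zero, add_zero]
    sum_nbij' (· + e) (· + e) he he (fun y _ => hee y) (fun y _ => hee y) fun y _ => by rw [hee]
  have hflip : ∀ y ∈ frobeniusFixed F m,
      chi F (FTr F m (c * (y + e))) = -chi F (FTr F m (c * y)) := fun y hy => by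
    have hcy : (c * y) ^ 2 ^ m = c * y := by rw [mul_pow, hc, (mem_frobeniusFixed.mp hy)]
    rw [mul_add, mul_inv_cancel_left₀ hc0, FTr_add, ht1, chi_add_one (FTr_eq_zero_or_one hcy)]
  rw [sum_congr rfl hflip, sum_neg_distrib] at hshift
  omega

end Subfield

section Norm

variable {F : Type*} [Field F] {m : ℕ} {u : F}

lemma pow_mul_pow_two_pow_add_one (hu : u ^ (2 ^ m + 1) = 1) {y : F} (hy : y ^ 2 ^ m = y)
    (i : ℕ) : (u ^ i * y) ^ (2 ^ m + 1) = y ^ 2 := by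
  rw [mul_pow, pow_right_comm, hu, one_pow, one_mul, pow_succ, hy, sq]

lemma zpow_pow_two_pow (hu : u ^ (2 ^ m + 1) = 1) (k : ℤ) : (u ^ k) ^ 2 ^ m = u ^ (-k) := by
  rw [zpow_neg]
  refine eq_inv_of_mul_eq_one_left ?_
  rw [← pow_succ, ← zpow_natCast, ← zpow_mul, mul_comm, zpow_mul, zpow_natCast, hu, one_zpow]

lemma FTr_niho_branch [CharP F 2] (hu : u ^ (2 ^ m + 1) = 1) {y : F} (hy1 : y ^ (2 ^ m - 1) = 1)
    {a c : F} {i s : ℕ}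
    (hac : a * u ^ ((i : ℤ) * (1 - 2 * (s : ℤ))) + a ^ 2 ^ m * u ^ ((i : ℤ) * (2 * (s : ℤ) - 1))
      = c) :
    FTr F (2 * m) (a * (u ^ i * y) ^ (s * (2 ^ m - 1) + 1)) = FTr F m (c * y) := by
  have hu0 : u ≠ 0 := by
    rintro rfl
    simp at hu
  have hy : y ^ 2 ^ m = y := by
    rw [← Nat.sub_add_cancel Nat.one_le_two_pow, pow_succ, hy1, one_mul]
  have hexp : u ^ (i * (s * (2 ^ m - 1) + 1)) = u ^ ((i : ℤ) * (1 - 2 * (s : ℤ))) := by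
    rw [← zpow_natCast, show ((i * (s * (2 ^ m - 1) + 1) : ℕ) : ℤ) =
        i * (1 - 2 * s) + ((2 ^ m + 1 : ℕ) : ℤ) * (i * s) by
          push_cast [Nat.cast_sub Nat.one_le_two_pow]; ring,
      zpow_add₀ hu0, zpow_mul u ((2 ^ m + 1 : ℕ) : ℤ), zpow_natCast, hu, one_zpow, mul_one]
  set A := a * u ^ ((i : ℤ) * (1 - 2 * (s : ℤ)))
  have hA : A + A ^ 2 ^ m = c := by
    rw [← hac, mul_pow, zpow_pow_two_pow hu, neg_mul_eq_mul_neg, neg_sub]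
  rw [mul_pow, ← pow_mul, hexp, pow_succ y, pow_mul', hy1, one_pow, one_mul, ← mul_assoc,
    FTr_two_mul, mul_pow, hy, ← add_mul, hA]

variable [Fintype F] [CharP F 2]

lemma exists_pow_mul_eq (hF : Fintype.card F = (2 ^ m) ^ 2) (hu : orderOf u = 2 ^ m + 1)
    {x : F} (hx : x ≠ 0) : ∃ i < 2 ^ m + 1, ∃ y ∈ (frobeniusFixed F m).erase 0, u ^ i * y = x := by
  obtain ⟨y, hy⟩ := surjective_frobenius F 2 (x ^ (2 ^ m + 1))
  rw [frobenius_def] at hy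
  have hN := mem_frobeniusFixed.mp (pow_two_pow_add_one_mem_frobeniusFixed hF x)
  have hyK : y ^ 2 ^ m = y := CharTwo.sq_inj.mp (by rw [pow_right_comm, hy, hN])
  have hy0 : y ≠ 0 := by
    rintro rfl
    exact hx (pow_eq_zero_iff (Nat.succ_ne_zero _) |>.mp (by rw [← hy]; ring))
  have hxy : (x * y⁻¹) ^ (2 ^ m + 1) = 1 := by
    rw [mul_pow, inv_pow, pow_succ y, hyK, ← sq, hy, mul_inv_cancel₀ (pow_ne_zero _ hx)]
  obtain ⟨i, hi, hui⟩ := (hu ▸ IsPrimitiveRoot.orderOf u).eq_pow_of_pow_eq_one hxy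
  exact ⟨i, hi, y, mem_erase.mpr ⟨hy0, mem_frobeniusFixed.mpr hyK⟩,
    by rw [hui, inv_mul_cancel_right₀ hy0]⟩

lemma sum_erase_zero_eq_sum_pow_mul {M : Type*} [AddCommMonoid M]
    (hF : Fintype.card F = (2 ^ m) ^ 2) (hu : orderOf u = 2 ^ m + 1) (φ : F → M) :
    ∑ x ∈ univ.erase 0, φ x =
      ∑ i ∈ range (2 ^ m + 1), ∑ y ∈ (frobeniusFixed F m).erase 0, φ (u ^ i * y) := by
  have hu1 : u ^ (2 ^ m + 1) = 1 := hu ▸ pow_orderOf_eq_one u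
  have hu0 : u ≠ 0 := by
    rintro rfl
    simp at hu1
  rw [← sum_product']
  refine (sum_nbij (fun p : ℕ × F => u ^ p.1 * p.2) ?_ ?_ ?_ fun _ _ => rfl).symm
  · intro p hp
    simp only [mem_product, mem_erase] at hp
    simp [hu0, hp.2.1]
  · rintro ⟨i, y⟩ hp ⟨j, z⟩ hq h
    simp only [coe_product, Set.mem_prod, mem_coe, mem_range, mem_erase, mem_frobeniusFixed]
      at hp hq h
    have hyz : y = z := CharTwo.sq_inj.mp <| by
      rw [← pow_mul_pow_two_pow_add_one hu1 hp.2.2 i, ← pow_mul_pow_two_pow_add_one hu1 hq.2.2 j, h]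
    subst hyz
    exact Prod.ext (pow_injOn_Iio_orderOf (by simpa [hu] using hp.1) (by simpa [hu] using hq.1)
      (mul_right_cancel₀ hp.2.1 h)) rfl
  · intro x hx
    obtain ⟨i, hi, y, hy, rfl⟩ := exists_pow_mul_eq hF hu (mem_erase.mp hx).1
    exact ⟨(i, y), mem_product.mpr ⟨mem_range.mpr hi, hy⟩, rfl⟩

lemma sum_chi_FTr_mul_pow_two_pow_add_one (hF : Fintype.card F = (2 ^ m) ^ 2)
    (hu : orderOf u = 2 ^ m + 1) {c : F} (hc : c ≠ 0) (hcq : c ^ 2 ^ m = c) :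
    ∑ x : F, chi F (FTr F m (c ^ 2 * x ^ (2 ^ m + 1))) = -2 ^ m := by
  have hu1 : u ^ (2 ^ m + 1) = 1 := hu ▸ pow_orderOf_eq_one u
  have hK : ∑ y ∈ (frobeniusFixed F m).erase 0, chi F (FTr F m (c * y)) = -1 := by
    have h := sum_frobeniusFixed_chi_FTr_mul hF (mem_frobeniusFixed.mpr hcq) hc
    rw [← add_sum_erase _ _ (mem_frobeniusFixed.mpr (zero_pow (by positivity)))] at h
    rw [mul_zero, FTr_zero, show chi F 0 = 1 by simp [chi]] at h
    omega
  have hterm : ∀ i, ∀ y ∈ (frobeniusFixed F m).erase 0,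
      chi F (FTr F m (c ^ 2 * (u ^ i * y) ^ (2 ^ m + 1))) = chi F (FTr F m (c * y)) := by
    intro i y hy
    have hyK := mem_frobeniusFixed.mp (mem_of_mem_erase hy)
    rw [pow_mul_pow_two_pow_add_one hu1 hyK, ← mul_pow,
      FTr_sq_of_pow_eq (by rw [mul_pow, hcq, hyK])]
  rw [← add_sum_erase _ _ (mem_univ 0), sum_erase_zero_eq_sum_pow_mul hF hu,
    sum_congr rfl fun i _ => (sum_congr rfl (hterm i)).trans hK]
  simp [chi]

lemma sum_chi_FTr_mul_pow_two_pow_add_one_add_FTr_mul (hF : Fintype.card F = (2 ^ m) ^ 2)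
    (hu : orderOf u = 2 ^ m + 1) {c : F} (hc : c ≠ 0) (hcq : c ^ 2 ^ m = c) (b : F) :
    ∑ x : F, chi F (FTr F m (c ^ 2 * x ^ (2 ^ m + 1)) + FTr F (2 * m) (b * x)) =
      2 ^ m * chi F (FTr F m ((c ^ 2)⁻¹ * b ^ (2 ^ m + 1)) + 1) := by
  set δ := c ^ 2
  have hδ : δ ^ 2 ^ m = δ := by rw [pow_right_comm, hcq]
  have hδ0 : δ ≠ 0 := pow_ne_zero 2 hc
  have hN : ∀ x : F, (x ^ (2 ^ m + 1)) ^ 2 ^ m = x ^ (2 ^ m + 1) := fun x =>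
    mem_frobeniusFixed.mp (pow_two_pow_add_one_mem_frobeniusFixed hF x)
  set x₀ := b ^ 2 ^ m * δ⁻¹
  have hx₀ : x₀ ^ 2 ^ m = b * δ⁻¹ := by
    rw [mul_pow, inv_pow, hδ, pow_two_pow_pow_two_pow hF]
  -- As in completing a square, the shift by `x₀` turns the linear term into a constant.
  have hshift : ∀ x : F, δ * (x + x₀) ^ (2 ^ m + 1) + (b * (x + x₀) + (b * (x + x₀)) ^ 2 ^ m) =
      δ⁻¹ * b ^ (2 ^ m + 1) + δ * x ^ (2 ^ m + 1) := fun x => by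
    rw [pow_succ, add_pow_char_pow, hx₀, mul_pow, add_pow_char_pow, hx₀]
    simp only [x₀]
    linear_combination (x ^ 2 ^ m * b ^ 2 ^ m + b * x + δ⁻¹ * b * b ^ 2 ^ m) * mul_inv_cancel₀ hδ0
      + (x ^ 2 ^ m * b ^ 2 ^ m + b * x + δ⁻¹ * b * b ^ 2 ^ m) * CharTwo.two_eq_zero (R := F)
  have hT : ∀ x : F, (δ * x ^ (2 ^ m + 1)) ^ 2 ^ m = δ * x ^ (2 ^ m + 1) := fun x => by
    rw [mul_pow, hδ, hN]
  have hT' : (δ⁻¹ * b ^ (2 ^ m + 1)) ^ 2 ^ m = δ⁻¹ * b ^ (2 ^ m + 1) := by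
    rw [mul_pow, inv_pow, hδ, hN]
  calc ∑ x : F, chi F (FTr F m (δ * x ^ (2 ^ m + 1)) + FTr F (2 * m) (b * x))
      = ∑ x : F, chi F (FTr F m (δ * (x + x₀) ^ (2 ^ m + 1)) + FTr F (2 * m) (b * (x + x₀))) :=
        (Fintype.sum_equiv (Equiv.addRight x₀) _ _ fun _ => rfl).symm
    _ = ∑ x : F, chi F (FTr F m (δ⁻¹ * b ^ (2 ^ m + 1))) * chi F (FTr F m (δ * x ^ (2 ^ m + 1))) :=
        Fintype.sum_congr _ _ fun x => by
          rw [FTr_two_mul, ← FTr_add, hshift, FTr_add,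
            chi_add (FTr_eq_zero_or_one hT') (FTr_eq_zero_or_one (hT x))]
    _ = 2 ^ m * chi F (FTr F m (δ⁻¹ * b ^ (2 ^ m + 1)) + 1) := by
        rw [← mul_sum, sum_chi_FTr_mul_pow_two_pow_add_one hF hu hc hcq,
          chi_add_one (FTr_eq_zero_or_one hT')]
        ring

end Norm

theorem stmt_15_general (m : ℕ) (F : Type*) [Field F] [Fintype F]
    (hF : Fintype.card F = (2 ^ m) ^ 2)
    (u : F) (hu : orderOf u = 2 ^ m + 1)
    (c : F) (hc : c ≠ 0) (hcq : c ^ (2 ^ m) = c)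
    (a : Fin (2 ^ m + 1) → F) (s : Fin (2 ^ m + 1) → ℕ)
    (hac : ∀ i : Fin (2 ^ m + 1),
      a i * u ^ (((i : ℕ) : ℤ) * (1 - 2 * (s i : ℤ))) +
        (a i) ^ (2 ^ m) * u ^ (((i : ℕ) : ℤ) * (2 * (s i : ℤ) - 1)) = c)
    (f : F → F) (hf0 : f 0 = 0)
    (hf : ∀ i : Fin (2 ^ m + 1), ∀ y : F, y ^ (2 ^ m - 1) = 1 →
      f (u ^ (i : ℕ) * y) =
        FTr F (2 * m) (a i * (u ^ (i : ℕ) * y) ^ (s i * (2 ^ m - 1) + 1))) :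
    (∀ b : F, |∑ x : F, chi F (f x + FTr F (2 * m) (b * x))| = (2 ^ m : ℤ)) ∧
      ∀ b : F, ∑ x : F, chi F (f x + FTr F (2 * m) (b * x)) =
        (2 ^ m : ℤ) * chi F (FTr F m ((c ^ 2)⁻¹ * b ^ (2 ^ m + 1)) + 1) := by
  have : CharP F 2 := charP_of_card_eq_prime_pow (f := m * 2) (by rw [hF, pow_mul])
  have hu1 : u ^ (2 ^ m + 1) = 1 := hu ▸ pow_orderOf_eq_one u
  have hf_eq : ∀ x, f x = FTr F m (c ^ 2 * x ^ (2 ^ m + 1)) := by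
    intro x
    rcases eq_or_ne x 0 with rfl | hx
    · simp [hf0]
    obtain ⟨i, hi, y, hy, rfl⟩ := exists_pow_mul_eq hF hu hx
    obtain ⟨hy0, hyK⟩ := mem_erase.mp hy
    rw [mem_frobeniusFixed] at hyK
    have hy1 : y ^ (2 ^ m - 1) = 1 := by
      rw [← mul_left_inj' hy0, ← pow_succ, Nat.sub_add_cancel Nat.one_le_two_pow, hyK, one_mul]
    rw [hf ⟨i, hi⟩ y hy1, FTr_niho_branch hu1 hy1 (hac ⟨i, hi⟩),
      pow_mul_pow_two_pow_add_one hu1 hyK, ← mul_pow, FTr_sq_of_pow_eq (by rw [mul_pow, hcq, hyK])]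
  have hW := sum_chi_FTr_mul_pow_two_pow_add_one_add_FTr_mul hF hu hc hcq
  simp only [hf_eq, hW, abs_mul, abs_chi, mul_one, abs_pow, abs_two, implies_true, and_self]

/-- Niho branch functions with a_i u^{i(1-2s_i)} + a_i^q u^{i(2s_i-1)} = c ∈ F_q^* for all i:
f is bent with Walsh transform q·(-1)^{Tr_1^m(c^{-2} b^{q+1}) + 1}. -/
theorem stmt_15 (m : ℕ) (hm : 1 ≤ m) (F : Type*) [Field F] [Fintype F]
    (hF : Fintype.card F = (2 ^ m) ^ 2)
    (u : F) (hu : orderOf u = 2 ^ m + 1)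
    (c : F) (hc : c ≠ 0) (hcq : c ^ (2 ^ m) = c)
    (a : Fin (2 ^ m + 1) → F) (s : Fin (2 ^ m + 1) → ℕ) (hs : ∀ i, s i ≤ 2 ^ m)
    (hac : ∀ i : Fin (2 ^ m + 1),
      a i * u ^ (((i : ℕ) : ℤ) * (1 - 2 * (s i : ℤ))) +
        (a i) ^ (2 ^ m) * u ^ (((i : ℕ) : ℤ) * (2 * (s i : ℤ) - 1)) = c)
    (f : F → F) (hf0 : f 0 = 0)
    (hf : ∀ i : Fin (2 ^ m + 1), ∀ y : F, y ^ (2 ^ m - 1) = 1 →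
      f (u ^ (i : ℕ) * y) =
        FTr F (2 * m) (a i * (u ^ (i : ℕ) * y) ^ (s i * (2 ^ m - 1) + 1))) :
    (∀ b : F, |∑ x : F, chi F (f x + FTr F (2 * m) (b * x))| = (2 ^ m : ℤ)) ∧
      ∀ b : F, ∑ x : F, chi F (f x + FTr F (2 * m) (b * x)) =
        (2 ^ m : ℤ) * chi F (FTr F m ((c ^ 2)⁻¹ * b ^ (2 ^ m + 1)) + 1) :=
  stmt_15_general m F hF u hu c hc hcq a s hac f hf0 hf
end
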